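/- arXiv:2503.10574 — 3 statements merged into one kernel-verified Lean document; each statement's English description precedes it below -/
import Mathlib

section
/- Let Π be a Borel probability measure on [0,1] with E_{Θ~Π}[H_B(Θ)] > 0, and let m₁ : ℕ → ℝ be the unique function with m₁(0) = 0 and, for ℓ ≥ 1, m₁(ℓ) = ℓ + E[m₁(ℓ-1-R_ℓ) + m₁(R_ℓ)]. Then there exists a finite constant C₀ (depending only on Π) such that for all ℓ ≥ 1, E[(m₁(R_ℓ) + m₁(ℓ-1-R_ℓ) + ℓ - m₁(ℓ))²] ≤ C₀·ℓ². -/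
open MeasureTheory

/-- Binary entropy `H_B(p) = -p log₂ p - (1-p) log₂ (1-p)` (with `0 log 0 = 0`). -/
noncomputable def binEnt (p : ℝ) : ℝ :=
  -(p * Real.logb 2 p) - (1 - p) * Real.logb 2 (1 - p)

/-- Expectation of `g (R_ℓ)` where `θ ~ μ` and, conditionally on `θ`,
`R_ℓ ~ Binomial(ℓ-1, θ)`. -/
noncomputable def binExp (μ : Measure ℝ) (ℓ : ℕ) (g : ℕ → ℝ) : ℝ :=
  ∫ θ, ∑ k ∈ Finset.range ℓ,
    ((ℓ - 1).choose k : ℝ) * θ ^ k * (1 - θ) ^ (ℓ - 1 - k) * g k ∂μ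

/-!
Write `h` for the binary entropy in nats and `A = 1 / E[h(Θ)]`. For `R ~ Bin(n, θ)`, convexity of
`x log x` and its tangent line give `E[R log R + (n - R) log (n - R)] = n log n - n h(θ) + O(1)`,
so `A n log n` solves the recursion up to `O(n)`. An induction bounds `m₁ n` above by
`A n log n + b n`. From below the recursion loses `A log n` at each step, which is recovered by the
concave correction `D √n`: since `√x + √y ≥ √(x + y) (1 + x y / (x + y)²)`, it gains
`D E[Θ (1 - Θ)] (n - 1) / √n`, and `E[Θ (1 - Θ)] > 0` because `E[h(Θ)] > 0`. Hence
`m₁ n = A n log n + O(n)`, and as `x log x + y log y` and `(x + y + 1) log (x + y + 1)` differ by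
`O(x + y + 1)`, the centred quantity `m₁ k + m₁ (ℓ - 1 - k) + ℓ - m₁ ℓ` is `O(ℓ)` for every `k`.
-/

open Finset Real

lemma Real.mul_log_le_mul_log_add {x y : ℝ} (hx : 0 ≤ x) (hy : 0 ≤ y) :
    x * log x ≤ x * log (x + y) := by
  rcases hx.eq_or_lt with rfl | hx
  · simp
  · exact mul_le_mul_of_nonneg_left (log_le_log hx (by linarith)) hx.le

lemma Real.mul_log_add_le {x y : ℝ} (hx : 0 ≤ x) (hy : 0 ≤ y) :
    x * log (x + y) ≤ x * log x + y := by
  rcases hx.eq_or_lt with rfl | hx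
  · simpa using hy
  · have h := log_le_sub_one_of_pos (show 0 < (x + y) / x by positivity)
    rw [log_div (by linarith) hx.ne', div_sub_one hx.ne', add_sub_cancel_left] at h
    have := mul_le_mul_of_nonneg_left h hx.le
    rw [mul_div_cancel₀ _ hx.ne'] at this
    linarith

lemma Real.mul_log_add_mul_log_le {x y : ℝ} (hx : 0 ≤ x) (hy : 0 ≤ y) :
    x * log x + y * log y ≤ (x + y) * log (x + y) := by
  have h := mul_log_le_mul_log_add hy hx
  rw [add_comm y] at h
  linarith [mul_log_le_mul_log_add hx hy, add_mul x y (log (x + y))]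

lemma Real.add_mul_log_add_le {x y : ℝ} (hx : 0 ≤ x) (hy : 0 ≤ y) :
    (x + y) * log (x + y) ≤ x * log x + y * log y + (x + y) := by
  have h := mul_log_add_le hy hx
  rw [add_comm y] at h
  linarith [mul_log_add_le hx hy, add_mul x y (log (x + y))]

lemma Real.mul_log_le_add_one_mul_log_add_one {x : ℝ} (hx : 0 ≤ x) :
    x * log x ≤ (x + 1) * log (x + 1) := by
  simpa using mul_log_add_mul_log_le hx zero_le_one

lemma Real.add_one_mul_log_add_one_le {x : ℝ} (hx : 0 ≤ x) :
    (x + 1) * log (x + 1) ≤ x * log x + log (x + 1) + 1 := by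
  linarith [mul_log_add_le hx zero_le_one]

lemma Real.mul_log_le_tangent {x c : ℝ} (hx : 0 ≤ x) (hc : 0 < c) :
    x * log x ≤ x * log c + x ^ 2 / c - x := by
  rcases hx.eq_or_lt with rfl | hx
  · simp
  · have h := log_le_sub_one_of_pos (show 0 < x / c by positivity)
    rw [log_div hx.ne' hc.ne'] at h
    have := mul_le_mul_of_nonneg_left h hx.le
    have e : x * (x / c - 1) = x ^ 2 / c - x := by ring
    linarith

lemma Real.mul_three_sub_div_two_le_sqrt {a : ℝ} (h0 : 0 ≤ a) (h1 : a ≤ 1) :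
    a * (3 - a) / 2 ≤ √a := by
  have ht := sq_sqrt h0
  have := sqrt_le_one.mpr h1
  nlinarith [sqrt_nonneg a, mul_nonneg (sq_nonneg (√a - 1)) (by positivity : 0 ≤ √a + 2)]

lemma Real.sqrt_add_mul_le_sqrt_add_sqrt {x y : ℝ} (hx : 0 ≤ x) (hy : 0 ≤ y) :
    √(x + y) * (1 + x * y / (x + y) ^ 2) ≤ √x + √y := by
  rcases (add_nonneg hx hy).eq_or_lt with hs | hs
  · rw [← hs, sqrt_zero, zero_mul]; positivity
  have key (a : ℝ) (ha : 0 ≤ a) (has : a ≤ x + y) :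
      √(x + y) * (a / (x + y) * (3 - a / (x + y)) / 2) ≤ √a := by
    have := mul_three_sub_div_two_le_sqrt (div_nonneg ha hs.le) ((div_le_one hs).mpr has)
    calc √(x + y) * (a / (x + y) * (3 - a / (x + y)) / 2)
        ≤ √(x + y) * √(a / (x + y)) := mul_le_mul_of_nonneg_left this (sqrt_nonneg _)
      _ = √a := by rw [← sqrt_mul hs.le, mul_div_cancel₀ _ hs.ne']
  have e : 1 + x * y / (x + y) ^ 2
      = x / (x + y) * (3 - x / (x + y)) / 2 + y / (x + y) * (3 - y / (x + y)) / 2 := by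
    field_simp; ring
  rw [e, mul_add]
  exact add_le_add (key x hx (by linarith)) (key y hy (by linarith))

lemma Real.sqrt_add_one_le {x : ℝ} (hx : 0 ≤ x) : √(x + 1) ≤ √x + 1 := by
  rw [sqrt_le_left (by positivity)]
  nlinarith [sq_sqrt hx, sqrt_nonneg x]

lemma Real.log_natCast_add_one_le (n : ℕ) : log (n + 1) ≤ 4 * ((n - 1) / √n) + 4 := by
  rcases Nat.eq_zero_or_pos n with rfl | hn
  · simp
  have hn1 : (1 : ℝ) ≤ n := by exact_mod_cast hn
  have hs1 : 1 ≤ √(n : ℝ) := one_le_sqrt.mpr hn1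
  have hlog : log (n + 1) ≤ 2 * √(n : ℝ) := by
    have h := log_le_sub_one_of_pos (sqrt_pos.mpr (show (0 : ℝ) < n + 1 by positivity))
    rw [log_sqrt (by positivity)] at h
    linarith [sqrt_add_one_le (Nat.cast_nonneg (α := ℝ) n)]
  have hgain : √(n : ℝ) - 1 ≤ (n - 1) / √n := by
    rw [le_div_iff₀ (by positivity), sub_mul, mul_self_sqrt (by positivity)]
    linarith
  linarith

noncomputable def binomAvg (n : ℕ) (θ : ℝ) (f : ℕ → ℝ) : ℝ :=
  ∑ k ∈ range (n + 1), (bernsteinPolynomial ℝ n k).eval θ * f k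

section binomAvg

variable {n : ℕ} {θ : ℝ} {f g : ℕ → ℝ}

lemma bernsteinPolynomial_eval_nonneg (k : ℕ) (h0 : 0 ≤ θ) (h1 : θ ≤ 1) :
    0 ≤ (bernsteinPolynomial ℝ n k).eval θ := by
  have : 0 ≤ 1 - θ := by linarith
  simp only [bernsteinPolynomial, Polynomial.eval_mul, Polynomial.eval_pow,
    Polynomial.eval_natCast, Polynomial.eval_X, Polynomial.eval_sub, Polynomial.eval_one]
  positivity

lemma binomAvg_add : binomAvg n θ (fun k => f k + g k) = binomAvg n θ f + binomAvg n θ g := by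
  simp only [binomAvg, mul_add, sum_add_distrib]

lemma binomAvg_sub : binomAvg n θ (fun k => f k - g k) = binomAvg n θ f - binomAvg n θ g := by
  simp only [binomAvg, mul_sub, sum_sub_distrib]

lemma binomAvg_const_mul (c : ℝ) : binomAvg n θ (fun k => c * f k) = c * binomAvg n θ f := by
  simp only [binomAvg, mul_sum, mul_left_comm]

lemma binomAvg_mono (h0 : 0 ≤ θ) (h1 : θ ≤ 1) (hfg : ∀ k ≤ n, f k ≤ g k) :
    binomAvg n θ f ≤ binomAvg n θ g :=
  sum_le_sum fun k hk => mul_le_mul_of_nonneg_left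
    (hfg k (Nat.lt_succ_iff.mp (mem_range.mp hk))) (bernsteinPolynomial_eval_nonneg k h0 h1)

lemma binomAvg_const (c : ℝ) : binomAvg n θ (fun _ => c) = c := by
  simp [binomAvg, ← sum_mul, ← Polynomial.eval_finsetSum, bernsteinPolynomial.sum]

lemma binomAvg_natCast : binomAvg n θ (fun k => (k : ℝ)) = n * θ := by
  have := congrArg (Polynomial.eval θ) (bernsteinPolynomial.sum_smul ℝ n)
  simpa [binomAvg, Polynomial.eval_finsetSum, mul_comm] using this

lemma binomAvg_variance : binomAvg n θ (fun k => (n * θ - k) ^ 2) = n * θ * (1 - θ) := by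
  have := congrArg (Polynomial.eval θ) (bernsteinPolynomial.variance ℝ n)
  simpa [binomAvg, Polynomial.eval_finsetSum, mul_comm] using this

lemma binomAvg_sq : binomAvg n θ (fun k => (k : ℝ) ^ 2) = (n * θ) ^ 2 + n * θ * (1 - θ) := by
  have h (k : ℕ) : (k : ℝ) ^ 2 = (n * θ - k) ^ 2 + (2 * (n * θ) * k + -(n * θ) ^ 2) := by ring
  simp only [h, binomAvg_add, binomAvg_const_mul, binomAvg_const, binomAvg_natCast,
    binomAvg_variance]
  ring

lemma binomAvg_reflect : binomAvg n θ (fun k => f (n - k)) = binomAvg n (1 - θ) f := by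
  rw [binomAvg, ← sum_range_reflect]
  refine sum_congr rfl fun k hk => ?_
  have hk : k ≤ n := Nat.lt_succ_iff.mp (mem_range.mp hk)
  rw [Nat.add_sub_cancel, Nat.sub_sub_self hk, ← bernsteinPolynomial.flip ℝ n k hk,
    Polynomial.eval_comp]
  simp

end binomAvg

section binomAvgEstimates

variable {n : ℕ} {θ : ℝ}

lemma binomAvg_quadratic (a b c : ℝ) :
    binomAvg n θ (fun k => a + b * k + c * (k : ℝ) ^ 2)
      = a + b * (n * θ) + c * ((n * θ) ^ 2 + n * θ * (1 - θ)) := by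
  simp only [binomAvg_add, binomAvg_const_mul, binomAvg_const, binomAvg_natCast, binomAvg_sq]

lemma mul_log_mul_add_mul_log_mul (x θ : ℝ) :
    x * θ * log (x * θ) + x * (1 - θ) * log (x * (1 - θ)) = x * log x - x * binEntropy θ := by
  have h1 := negMulLog_mul x θ
  have h2 := negMulLog_mul x (1 - θ)
  rw [binEntropy_eq_negMulLog_add_negMulLog_one_sub]
  simp only [negMulLog] at *
  linear_combination -h1 - h2

lemma binomAvg_mul_log_le (h0 : 0 ≤ θ) (h1 : θ ≤ 1) :
    binomAvg n θ (fun k => k * log k) ≤ n * θ * log (n * θ) + 1 := by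
  set m : ℝ := n * θ
  have hm : 0 ≤ m := by positivity
  have hm1 : 0 < m + 1 := by linarith
  have htan : binomAvg n θ (fun k => k * log k)
      ≤ 0 + (log (m + 1) - 1) * m + (m + 1)⁻¹ * (m ^ 2 + m * (1 - θ)) := by
    refine (binomAvg_mono h0 h1 fun k _ => ?_).trans_eq (binomAvg_quadratic _ _ _)
    have := mul_log_le_tangent (Nat.cast_nonneg (α := ℝ) k) hm1
    linarith [show (k : ℝ) ^ 2 / (m + 1) = (m + 1)⁻¹ * (k : ℝ) ^ 2 from div_eq_inv_mul _ _]
  have hmom : (m + 1)⁻¹ * (m ^ 2 + m * (1 - θ)) ≤ m := by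
    rw [inv_mul_le_iff₀ hm1]
    nlinarith
  linarith [mul_log_add_le hm zero_le_one]

lemma mul_log_le_binomAvg (h0 : 0 ≤ θ) (h1 : θ ≤ 1) :
    n * θ * log (n * θ) ≤ binomAvg n θ (fun k => k * log k) := by
  have hw : ∑ k ∈ range (n + 1), (bernsteinPolynomial ℝ n k).eval θ = 1 := by
    simpa [binomAvg] using binomAvg_const (n := n) (θ := θ) 1
  have := convexOn_mul_log.map_sum_le (t := range (n + 1))
    (fun k _ => bernsteinPolynomial_eval_nonneg k h0 h1) hw
    (p := fun k => (k : ℝ)) (fun k _ => Set.mem_Ici.mpr (Nat.cast_nonneg k))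
  simp only [smul_eq_mul] at this
  rwa [← binomAvg, binomAvg_natCast] at this

lemma binomAvg_mul_log_add_reflect_le (h0 : 0 ≤ θ) (h1 : θ ≤ 1) :
    binomAvg n (1 - θ) (fun k => k * log k) + binomAvg n θ (fun k => k * log k)
      ≤ n * log n - n * binEntropy θ + 2 := by
  linarith [binomAvg_mul_log_le (n := n) (by linarith : 0 ≤ 1 - θ) (by linarith),
    binomAvg_mul_log_le (n := n) h0 h1, mul_log_mul_add_mul_log_mul n θ]

lemma le_binomAvg_mul_log_add_reflect (h0 : 0 ≤ θ) (h1 : θ ≤ 1) :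
    n * log n - n * binEntropy θ
      ≤ binomAvg n (1 - θ) (fun k => k * log k) + binomAvg n θ (fun k => k * log k) := by
  linarith [mul_log_le_binomAvg (n := n) (by linarith : 0 ≤ 1 - θ) (by linarith),
    mul_log_le_binomAvg (n := n) h0 h1, mul_log_mul_add_mul_log_mul n θ]

lemma sqrt_add_le_binomAvg (h0 : 0 ≤ θ) (h1 : θ ≤ 1) :
    √n + (n - 1) / √n * (θ * (1 - θ))
      ≤ binomAvg n (1 - θ) (fun k => √(k : ℝ)) + binomAvg n θ (fun k => √(k : ℝ)) := by
  rcases Nat.eq_zero_or_pos n with rfl | hn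
  · simp [binomAvg]
  have hn : (0 : ℝ) < n := by exact_mod_cast hn
  have hpt : ∀ k ≤ n, √(n : ℝ) + √n / n * k + (-(√n / n ^ 2)) * (k : ℝ) ^ 2
      ≤ √((n - k : ℕ) : ℝ) + √(k : ℝ) := by
    intro k hk
    have h := sqrt_add_mul_le_sqrt_add_sqrt (Nat.cast_nonneg (α := ℝ) (n - k))
      (Nat.cast_nonneg (α := ℝ) k)
    rw [Nat.cast_sub hk, sub_add_cancel] at h
    rw [Nat.cast_sub hk]
    refine le_of_eq_of_le ?_ h
    field_simp
    ring
  rw [← binomAvg_reflect, ← binomAvg_add]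
  refine le_of_eq_of_le ?_ ((binomAvg_quadratic _ _ _).symm.trans_le (binomAvg_mono h0 h1 hpt))
  have hs := sq_sqrt hn.le
  field_simp
  rw [hs]
  ring

end binomAvgEstimates

noncomputable def upperEnvelope (A b : ℝ) (k : ℕ) : ℝ := A * (k * log k) + b * k

noncomputable def lowerEnvelope (A B D : ℝ) (k : ℕ) : ℝ := A * (k * log k) - B * k + D * √k

section envelopes

variable {n : ℕ} {θ A : ℝ}

lemma binomAvg_upperEnvelope (b : ℝ) :
    binomAvg n θ (upperEnvelope A b)
      = A * binomAvg n θ (fun k => k * log k) + b * (n * θ) := by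
  unfold upperEnvelope
  rw [binomAvg_add, binomAvg_const_mul, binomAvg_const_mul, binomAvg_natCast]

lemma binomAvg_lowerEnvelope (B D : ℝ) :
    binomAvg n θ (lowerEnvelope A B D)
      = A * binomAvg n θ (fun k => k * log k) - B * (n * θ)
        + D * binomAvg n θ (fun k => √(k : ℝ)) := by
  unfold lowerEnvelope
  rw [binomAvg_add, binomAvg_sub, binomAvg_const_mul, binomAvg_const_mul, binomAvg_const_mul,
    binomAvg_natCast]

lemma binomAvg_upperEnvelope_le (b : ℝ) (hA : 0 ≤ A) (h0 : 0 ≤ θ) (h1 : θ ≤ 1) :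
    binomAvg n θ (fun k => upperEnvelope A b (n - k) + upperEnvelope A b k)
      ≤ A * (n * log n) + 2 * A + b * n + -(A * n) * binEntropy θ := by
  rw [binomAvg_add, binomAvg_reflect, binomAvg_upperEnvelope, binomAvg_upperEnvelope]
  linarith [mul_le_mul_of_nonneg_left (binomAvg_mul_log_add_reflect_le (n := n) h0 h1) hA]

lemma binomAvg_lowerEnvelope_ge (B : ℝ) {D : ℝ} (hA : 0 ≤ A) (hD : 0 ≤ D)
    (h0 : 0 ≤ θ) (h1 : θ ≤ 1) :
    A * (n * log n) - B * n + D * √n + -(A * n) * binEntropy θ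
        + D * ((n - 1) / √n) * (θ * (1 - θ))
      ≤ binomAvg n θ (fun k => lowerEnvelope A B D (n - k) + lowerEnvelope A B D k) := by
  rw [binomAvg_add, binomAvg_reflect, binomAvg_lowerEnvelope, binomAvg_lowerEnvelope]
  linarith [mul_le_mul_of_nonneg_left (le_binomAvg_mul_log_add_reflect (n := n) h0 h1) hA,
    mul_le_mul_of_nonneg_left (sqrt_add_le_binomAvg (n := n) h0 h1) hD]

end envelopes

lemma binEnt_eq_binEntropy_div (p : ℝ) : binEnt p = binEntropy p / log 2 := by
  simp only [binEnt, binEntropy, logb, log_inv]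
  ring

lemma binExp_succ (μ : Measure ℝ) (n : ℕ) (g : ℕ → ℝ) :
    binExp μ (n + 1) g = ∫ θ, binomAvg n θ g ∂μ := by
  simp [binExp, binomAvg, bernsteinPolynomial]

lemma continuous_binomAvg (n : ℕ) (f : ℕ → ℝ) : Continuous (fun θ => binomAvg n θ f) := by
  unfold binomAvg
  fun_prop

lemma Continuous.integrable_of_ae_mem_Icc {E : Type*} [NormedAddCommGroup E] {μ : Measure ℝ}
    [IsFiniteMeasure μ] {a b : ℝ} {f : ℝ → E} (hf : Continuous f)
    (hμ : ∀ᵐ x ∂μ, x ∈ Set.Icc a b) : Integrable f μ := by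
  rw [← Measure.restrict_eq_self_of_ae_mem hμ]
  exact hf.integrableOn_Icc

section mixture

variable {μ : Measure ℝ} [IsProbabilityMeasure μ]

lemma binExp_le_of_forall (hμ : ∀ᵐ θ ∂μ, θ ∈ Set.Icc (0 : ℝ) 1) {n : ℕ} {g : ℕ → ℝ}
    (a b : ℝ) (h : ∀ θ ∈ Set.Icc (0 : ℝ) 1, binomAvg n θ g ≤ a + b * binEntropy θ) :
    binExp μ (n + 1) g ≤ a + b * ∫ θ, binEntropy θ ∂μ := by
  have hE := binEntropy_continuous.integrable_of_ae_mem_Icc hμ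
  calc binExp μ (n + 1) g ≤ ∫ θ, a + b * binEntropy θ ∂μ := by
        rw [binExp_succ]
        exact integral_mono_ae
          ((continuous_binomAvg n g).integrable_of_ae_mem_Icc hμ)
          ((integrable_const a).add (hE.const_mul b)) (hμ.mono h)
    _ = a + b * ∫ θ, binEntropy θ ∂μ := by
        rw [integral_add (integrable_const a) (hE.const_mul b), integral_const_mul]
        simp

lemma le_binExp_of_forall (hμ : ∀ᵐ θ ∂μ, θ ∈ Set.Icc (0 : ℝ) 1) {n : ℕ} {g : ℕ → ℝ}
    (a b c : ℝ)
    (h : ∀ θ ∈ Set.Icc (0 : ℝ) 1, a + b * binEntropy θ + c * (θ * (1 - θ)) ≤ binomAvg n θ g) :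
    a + b * (∫ θ, binEntropy θ ∂μ) + c * ∫ θ, θ * (1 - θ) ∂μ ≤ binExp μ (n + 1) g := by
  have hE := (binEntropy_continuous.integrable_of_ae_mem_Icc hμ).const_mul b
  have hq := ((show Continuous fun θ : ℝ => θ * (1 - θ) by fun_prop).integrable_of_ae_mem_Icc
    hμ).const_mul c
  calc a + b * (∫ θ, binEntropy θ ∂μ) + c * ∫ θ, θ * (1 - θ) ∂μ
        = ∫ θ, a + b * binEntropy θ + c * (θ * (1 - θ)) ∂μ := by
        have hsum : Integrable (fun θ => a + b * binEntropy θ) μ := (integrable_const a).add hE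
        rw [integral_add hsum hq, integral_add (integrable_const a) hE,
          integral_const_mul, integral_const_mul]
        simp
    _ ≤ binExp μ (n + 1) g := by
        rw [binExp_succ]
        exact integral_mono_ae (((integrable_const a).add hE).add hq)
          ((continuous_binomAvg n g).integrable_of_ae_mem_Icc hμ) (hμ.mono h)

lemma integral_mul_one_sub_pos (hμ : ∀ᵐ θ ∂μ, θ ∈ Set.Icc (0 : ℝ) 1)
    (hH : 0 < ∫ θ, binEntropy θ ∂μ) : 0 < ∫ θ, θ * (1 - θ) ∂μ := by
  have hq : 0 ≤ᵐ[μ] fun θ : ℝ => θ * (1 - θ) :=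
    hμ.mono fun θ h => mul_nonneg h.1 (by linarith [h.2])
  refine (integral_nonneg_of_ae hq).lt_of_ne fun h0 => hH.ne' ?_
  have hqi : Integrable (fun θ : ℝ => θ * (1 - θ)) μ :=
    (show Continuous fun θ : ℝ => θ * (1 - θ) by fun_prop).integrable_of_ae_mem_Icc hμ
  have hz := (integral_eq_zero_iff_of_nonneg_ae hq hqi).mp h0.symm
  refine integral_eq_zero_of_ae (hz.mono fun θ hθ => ?_)
  rcases mul_eq_zero.mp hθ with h | h
  · simp [h]
  · simp [show θ = 1 by linarith]

end mixture

section recursion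

variable {μ : Measure ℝ} [IsProbabilityMeasure μ] {m : ℕ → ℝ} {A : ℝ}

theorem le_upperEnvelope (hμ : ∀ᵐ θ ∂μ, θ ∈ Set.Icc (0 : ℝ) 1) (hA0 : 0 ≤ A)
    (hA : A * ∫ θ, binEntropy θ ∂μ = 1) (hm0 : m 0 = 0)
    (hrec : ∀ n : ℕ, m (n + 1) = n + 1 + binExp μ (n + 1) (fun k => m (n - k) + m k))
    (n : ℕ) : m n ≤ upperEnvelope A (2 * A + 1) n := by
  induction n using Nat.strong_induction_on with
  | _ n ih =>
    rcases n with _ | n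
    · simp [hm0, upperEnvelope]
    have hstep := binExp_le_of_forall hμ _ _ fun θ hθ =>
      (binomAvg_mono hθ.1 hθ.2 fun k hk => add_le_add (ih _ (by omega)) (ih _ (by omega))).trans
        (binomAvg_upperEnvelope_le (n := n) (2 * A + 1) hA0 hθ.1 hθ.2)
    have hH : -(A * n) * ∫ θ, binEntropy θ ∂μ = -n := by linear_combination (-(n : ℝ)) * hA
    have hn : (0 : ℝ) ≤ n := n.cast_nonneg
    rw [hrec n, upperEnvelope]
    push_cast
    linarith [mul_le_mul_of_nonneg_left (mul_log_le_add_one_mul_log_add_one hn) hA0]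

theorem lowerEnvelope_le (hμ : ∀ᵐ θ ∂μ, θ ∈ Set.Icc (0 : ℝ) 1) {D : ℝ} (hA0 : 0 ≤ A)
    (hD0 : 0 ≤ D) (hA : A * ∫ θ, binEntropy θ ∂μ = 1) (hD : D * ∫ θ, θ * (1 - θ) ∂μ = 4 * A)
    (hm0 : m 0 = 0)
    (hrec : ∀ n : ℕ, m (n + 1) = n + 1 + binExp μ (n + 1) (fun k => m (n - k) + m k))
    (n : ℕ) : lowerEnvelope A (5 * A + D) D n ≤ m n := by
  induction n using Nat.strong_induction_on with
  | _ n ih =>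
    rcases n with _ | n
    · simp [hm0, lowerEnvelope]
    have hstep := le_binExp_of_forall hμ _ _ _ fun θ hθ =>
      (binomAvg_lowerEnvelope_ge (n := n) (5 * A + D) hA0 hD0 hθ.1 hθ.2).trans
        (binomAvg_mono hθ.1 hθ.2 fun k hk => add_le_add (ih _ (by omega)) (ih _ (by omega)))
    have hH : -(A * n) * ∫ θ, binEntropy θ ∂μ = -n := by linear_combination (-(n : ℝ)) * hA
    have hK : D * ((n - 1) / √n) * ∫ θ, θ * (1 - θ) ∂μ = 4 * A * ((n - 1) / √n) := by
      rw [mul_right_comm, hD]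
    have hn : (0 : ℝ) ≤ n := n.cast_nonneg
    rw [hrec n, lowerEnvelope]
    push_cast
    -- the gain `4 A (n - 1) / √n` of the square-root term pays for the loss `A log (n + 1)`
    linarith [mul_le_mul_of_nonneg_left (add_one_mul_log_add_one_le hn) hA0,
      mul_le_mul_of_nonneg_left (log_natCast_add_one_le n) hA0,
      mul_le_mul_of_nonneg_left (sqrt_add_one_le hn) hD0]

end recursion

theorem exists_abs_sub_mul_log_le {μ : Measure ℝ} [IsProbabilityMeasure μ] {m : ℕ → ℝ}
    (hμ : ∀ᵐ θ ∂μ, θ ∈ Set.Icc (0 : ℝ) 1) (hH : 0 < ∫ θ, binEntropy θ ∂μ) (hm0 : m 0 = 0)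
    (hrec : ∀ n : ℕ, m (n + 1) = n + 1 + binExp μ (n + 1) (fun k => m (n - k) + m k)) :
    ∃ c, ∀ n : ℕ, |m n - (∫ θ, binEntropy θ ∂μ)⁻¹ * (n * log n)| ≤ c * n := by
  set A := (∫ θ, binEntropy θ ∂μ)⁻¹
  have hK := integral_mul_one_sub_pos hμ hH
  set D := 4 * A / ∫ θ, θ * (1 - θ) ∂μ
  have hA0 : 0 ≤ A := inv_nonneg.mpr hH.le
  have hD0 : 0 ≤ D := by positivity
  have hA : A * ∫ θ, binEntropy θ ∂μ = 1 := inv_mul_cancel₀ hH.ne'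
  have hD : D * ∫ θ, θ * (1 - θ) ∂μ = 4 * A := div_mul_cancel₀ _ hK.ne'
  refine ⟨max (2 * A + 1) (5 * A + D), fun n => abs_le.mpr ⟨?_, ?_⟩⟩
  · have h := lowerEnvelope_le hμ hA0 hD0 hA hD hm0 hrec n
    rw [lowerEnvelope] at h
    linarith [mul_le_mul_of_nonneg_right (le_max_right (2 * A + 1) (5 * A + D)) n.cast_nonneg,
      mul_nonneg hD0 (sqrt_nonneg (n : ℝ))]
  · have h := le_upperEnvelope hμ hA0 hA hm0 hrec n
    rw [upperEnvelope] at h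
    linarith [mul_le_mul_of_nonneg_right (le_max_left (2 * A + 1) (5 * A + D)) n.cast_nonneg]

lemma abs_add_sub_le_of_abs_sub_mul_log_le {m : ℕ → ℝ} {A c : ℝ} (hA : 0 ≤ A)
    (hm : ∀ n : ℕ, |m n - A * (n * log n)| ≤ c * n) {k j n : ℕ} (hkj : k + j = n) :
    |m k + m j + (n + 1) - m (n + 1)| ≤ (2 * c + 2 * A + 1) * (n + 1) := by
  have hc : 0 ≤ c := by simpa using (abs_nonneg _).trans (hm 1)
  have hk := abs_le.mp (hm k)
  have hj := abs_le.mp (hm j)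
  have hn1 := abs_le.mp (hm (n + 1))
  push_cast at hn1
  have hkj : (k : ℝ) + j = n := by exact_mod_cast hkj
  have hk0 : (0 : ℝ) ≤ k := k.cast_nonneg
  have hj0 : (0 : ℝ) ≤ j := j.cast_nonneg
  have hn0 : (0 : ℝ) ≤ n := n.cast_nonneg
  have hsplit_le : k * log k + j * log j ≤ n * log n := by
    simpa [hkj] using mul_log_add_mul_log_le hk0 hj0
  have hsplit_ge : n * log n ≤ k * log k + j * log j + n := by
    simpa [hkj] using add_mul_log_add_le hk0 hj0
  have hlog : log ((n : ℝ) + 1) ≤ n := by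
    linarith [log_le_sub_one_of_pos (by linarith : (0 : ℝ) < n + 1)]
  have hcn : c * k + c * j = c * n := by rw [← mul_add, hkj]
  rw [abs_le]
  constructor
  · linarith [mul_le_mul_of_nonneg_left hsplit_ge hA,
      mul_le_mul_of_nonneg_left (add_one_mul_log_add_one_le hn0) hA,
      mul_le_mul_of_nonneg_left hlog hA]
  · linarith [mul_le_mul_of_nonneg_left hsplit_le hA,
      mul_le_mul_of_nonneg_left (mul_log_le_add_one_mul_log_add_one hn0) hA,
      mul_nonneg hA hn0]

theorem stmt3 (μ : Measure ℝ) [IsProbabilityMeasure μ]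
    (hsupp : μ (Set.Icc (0:ℝ) 1)ᶜ = 0)
    (hpos : 0 < ∫ θ, binEnt θ ∂μ)
    (m₁ : ℕ → ℝ) (hm0 : m₁ 0 = 0)
    (hmrec : ∀ ℓ : ℕ, 1 ≤ ℓ →
      m₁ ℓ = (ℓ : ℝ) + binExp μ ℓ (fun k => m₁ (ℓ - 1 - k) + m₁ k)) :
    ∃ C₀ : ℝ, ∀ ℓ : ℕ, 1 ≤ ℓ →
      binExp μ ℓ (fun k => (m₁ k + m₁ (ℓ - 1 - k) + (ℓ : ℝ) - m₁ ℓ) ^ 2)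
        ≤ C₀ * (ℓ : ℝ) ^ 2 := by
  have hμ : ∀ᵐ θ ∂μ, θ ∈ Set.Icc (0 : ℝ) 1 := ae_iff.mpr hsupp
  have hH : 0 < ∫ θ, binEntropy θ ∂μ := by
    simp only [binEnt_eq_binEntropy_div, integral_div] at hpos
    exact (div_pos_iff_of_pos_right (log_pos one_lt_two)).mp hpos
  have hrec (n : ℕ) : m₁ (n + 1) = n + 1 + binExp μ (n + 1) (fun k => m₁ (n - k) + m₁ k) := by
    simpa using hmrec (n + 1) (by omega)
  obtain ⟨c, hc⟩ := exists_abs_sub_mul_log_le hμ hH hm0 hrec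
  set C := 2 * c + 2 * (∫ θ, binEntropy θ ∂μ)⁻¹ + 1
  refine ⟨C ^ 2, fun ℓ hℓ => ?_⟩
  obtain ⟨n, rfl⟩ : ∃ n, ℓ = n + 1 := ⟨ℓ - 1, by omega⟩
  refine (binExp_le_of_forall hμ (C ^ 2 * ((n : ℝ) + 1) ^ 2) 0 fun θ hθ => ?_).trans_eq
    (by push_cast; ring)
  rw [zero_mul, add_zero]
  refine (binomAvg_mono hθ.1 hθ.2 fun k hk => ?_).trans_eq (binomAvg_const _)
  have h := abs_add_sub_le_of_abs_sub_mul_log_le (inv_nonneg.mpr hH.le) hc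
    (show k + (n - k) = n by omega)
  push_cast
  rw [← mul_pow, ← sq_abs]
  exact pow_le_pow_left₀ (abs_nonneg _) h 2
end

section
/- Let Π be a Borel probability measure on [0,1], Θ ~ Π, h := E[H_B(Θ)], and let Δ : ℕ → ℝ be the unique function with Δ(0) = 1 and, for ℓ ≥ 1, Δ(ℓ) = 1 + E[Δ(Γ_ℓ)]. Then h·Δ(ℓ) ≤ log₂(ℓ+1) + h for every ℓ ≥ 1. -/
open MeasureTheory

/-- Expectation of `g (Γ_ℓ)` where `θ ~ μ` and, conditionally on `θ`, `Γ_ℓ` is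
`Binomial(ℓ-1, θ)` with probability `θ` and `Binomial(ℓ-1, 1-θ)` with probability `1-θ`. -/
noncomputable def gammaExp (μ : Measure ℝ) (ℓ : ℕ) (g : ℕ → ℝ) : ℝ :=
  ∫ θ, (θ * ∑ k ∈ Finset.range ℓ,
          ((ℓ - 1).choose k : ℝ) * θ ^ k * (1 - θ) ^ (ℓ - 1 - k) * g k
      + (1 - θ) * ∑ k ∈ Finset.range ℓ,
          ((ℓ - 1).choose k : ℝ) * (1 - θ) ^ k * θ ^ (ℓ - 1 - k) * g k) ∂μ

/-! By strong induction on `ℓ`: conditionally on `Θ = θ`, the induction hypothesis bounds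
`h · E[Δ(Γ_ℓ)]` by `E[log₂(Γ_ℓ + 1)] + h`. Jensen's inequality for the two binomial laws gives
`E[log₂(Γ_ℓ + 1) | θ] ≤ θ log₂ a + (1 - θ) log₂ b` with `a = (ℓ-1)θ + 1`, `b = (ℓ-1)(1-θ) + 1`,
and the two-term log-sum inequality `θ log₂(a/θ) + (1-θ) log₂(b/(1-θ)) ≤ log₂(a + b)`
absorbs `H_B(θ)`, leaving `log₂(ℓ + 1)` since `a + b = ℓ + 1`. -/

open Finset Polynomial Real

lemma concaveOn_logb {b : ℝ} (hb : 1 ≤ b) : ConcaveOn ℝ (Set.Ioi 0) (logb b) :=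
  (strictConcaveOn_log_Ioi.concaveOn.smul (inv_nonneg.mpr (log_nonneg hb))).congr
    fun y _ => by simp [logb, div_eq_inv_mul]

lemma bernsteinPolynomial_eval_nonneg_s7 {n : ℕ} {x : ℝ} (hx₀ : 0 ≤ x) (hx₁ : x ≤ 1)
    (k : ℕ) : 0 ≤ (bernsteinPolynomial ℝ n k).eval x := by
  have : 0 ≤ 1 - x := by linarith
  simp only [bernsteinPolynomial, eval_mul, eval_pow, eval_sub, eval_one, eval_X, eval_natCast]
  positivity

lemma sum_bernsteinPolynomial_eval (n : ℕ) (x : ℝ) :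
    ∑ k ∈ range (n + 1), (bernsteinPolynomial ℝ n k).eval x = 1 := by
  rw [← eval_finsetSum, bernsteinPolynomial.sum, eval_one]

lemma sum_natCast_mul_bernsteinPolynomial_eval (n : ℕ) (x : ℝ) :
    ∑ k ∈ range (n + 1), (k : ℝ) * (bernsteinPolynomial ℝ n k).eval x = n * x := by
  simpa [eval_finsetSum, nsmul_eq_mul] using
    congrArg (eval x) (bernsteinPolynomial.sum_smul (R := ℝ) n)

-- `E[g(X)]` for `X ~ Binomial(n, x)`: the Bernstein polynomials are the binomial weights.
noncomputable def binomialExp (n : ℕ) (x : ℝ) (g : ℕ → ℝ) : ℝ :=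
  ∑ k ∈ range (n + 1), (bernsteinPolynomial ℝ n k).eval x * g k

section binomialExp

variable {n : ℕ} {x : ℝ}

lemma binomialExp_add_const (g : ℕ → ℝ) (c : ℝ) :
    binomialExp n x (fun k => g k + c) = binomialExp n x g + c := by
  simp only [binomialExp, mul_add, sum_add_distrib, ← sum_mul, sum_bernsteinPolynomial_eval,
    one_mul]

lemma binomialExp_const_mul (c : ℝ) (g : ℕ → ℝ) :
    binomialExp n x (fun k => c * g k) = c * binomialExp n x g := by
  simp only [binomialExp, mul_sum]
  exact sum_congr rfl fun k _ => by ring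

lemma binomialExp_mono (hx₀ : 0 ≤ x) (hx₁ : x ≤ 1) {g₁ g₂ : ℕ → ℝ}
    (hg : ∀ k ≤ n, g₁ k ≤ g₂ k) : binomialExp n x g₁ ≤ binomialExp n x g₂ :=
  sum_le_sum fun k hk => mul_le_mul_of_nonneg_left (hg k (mem_range_succ_iff.mp hk))
    (bernsteinPolynomial_eval_nonneg_s7 hx₀ hx₁ k)

lemma binomialExp_natCast_add_one (n : ℕ) (x : ℝ) :
    binomialExp n x (fun k => k + 1) = n * x + 1 := by
  rw [binomialExp_add_const, ← sum_natCast_mul_bernsteinPolynomial_eval]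
  simp only [binomialExp, mul_comm]

lemma binomialExp_logb_le (hx₀ : 0 ≤ x) (hx₁ : x ≤ 1) {f : ℕ → ℝ}
    (hf : ∀ k ≤ n, 0 < f k) :
    binomialExp n x (fun k => logb 2 (f k)) ≤ logb 2 (binomialExp n x f) :=
  (concaveOn_logb one_le_two).le_map_sum
    (fun k _ => bernsteinPolynomial_eval_nonneg_s7 hx₀ hx₁ k) (sum_bernsteinPolynomial_eval n x)
    fun k hk => hf k (mem_range_succ_iff.mp hk)

end binomialExp

-- `E[g(Γ_{n+1}) | Θ = θ]`
noncomputable def gammaCondExp (n : ℕ) (g : ℕ → ℝ) (θ : ℝ) : ℝ :=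
  θ * binomialExp n θ g + (1 - θ) * binomialExp n (1 - θ) g

section gammaCondExp

variable {n : ℕ}

lemma gammaExp_succ (μ : Measure ℝ) (n : ℕ) (g : ℕ → ℝ) :
    gammaExp μ (n + 1) g = ∫ θ, gammaCondExp n g θ ∂μ := by
  simp [gammaExp, gammaCondExp, binomialExp, bernsteinPolynomial]

lemma continuous_gammaCondExp (n : ℕ) (g : ℕ → ℝ) : Continuous (gammaCondExp n g) := by
  unfold gammaCondExp binomialExp
  fun_prop

lemma gammaCondExp_add_const (g : ℕ → ℝ) (c θ : ℝ) :
    gammaCondExp n (fun k => g k + c) θ = gammaCondExp n g θ + c := by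
  simp only [gammaCondExp, binomialExp_add_const]
  ring

lemma gammaCondExp_const_mul (c : ℝ) (g : ℕ → ℝ) (θ : ℝ) :
    gammaCondExp n (fun k => c * g k) θ = c * gammaCondExp n g θ := by
  simp only [gammaCondExp, binomialExp_const_mul]
  ring

lemma gammaCondExp_mono {θ : ℝ} (hθ : θ ∈ Set.Icc (0 : ℝ) 1) {g₁ g₂ : ℕ → ℝ}
    (hg : ∀ k ≤ n, g₁ k ≤ g₂ k) : gammaCondExp n g₁ θ ≤ gammaCondExp n g₂ θ := by
  obtain ⟨h₀, h₁⟩ := hθ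
  unfold gammaCondExp
  gcongr
  · exact binomialExp_mono h₀ h₁ hg
  · exact binomialExp_mono (by linarith) (by linarith) hg

end gammaCondExp

lemma mul_logb_add_mul_logb_add_binEnt_le {θ a b : ℝ} (hθ : θ ∈ Set.Icc (0 : ℝ) 1)
    (ha : 0 < a) (hb : 0 < b) :
    θ * logb 2 a + (1 - θ) * logb 2 b + binEnt θ ≤ logb 2 (a + b) := by
  obtain ⟨h₀, h₁⟩ := hθ
  rcases h₀.eq_or_lt with rfl | h₀
  · simpa [binEnt] using logb_le_logb_of_le one_lt_two hb (by linarith)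
  rcases h₁.eq_or_lt with rfl | h₁
  · simpa [binEnt] using logb_le_logb_of_le one_lt_two ha (by linarith)
  have h₁ : 0 < 1 - θ := by linarith
  have hjensen := (concaveOn_logb one_le_two).2 (div_pos ha h₀) (div_pos hb h₁) h₀.le h₁.le
    (add_sub_cancel θ 1)
  simp only [smul_eq_mul] at hjensen
  rw [mul_div_cancel₀ a h₀.ne', mul_div_cancel₀ b h₁.ne',
    logb_div ha.ne' h₀.ne', logb_div hb.ne' h₁.ne'] at hjensen
  unfold binEnt
  linarith

lemma gammaCondExp_logb_add_binEnt_le (n : ℕ) {θ : ℝ} (hθ : θ ∈ Set.Icc (0 : ℝ) 1) :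
    gammaCondExp n (fun k => logb 2 (k + 1)) θ + binEnt θ ≤ logb 2 (n + 2) := by
  obtain ⟨h₀, h₁⟩ := hθ
  have hθ' : 0 ≤ 1 - θ := by linarith
  have hpos : ∀ k ≤ n, (0 : ℝ) < k + 1 := fun k _ => by positivity
  calc gammaCondExp n (fun k => logb 2 (k + 1)) θ + binEnt θ
      ≤ θ * logb 2 (n * θ + 1) + (1 - θ) * logb 2 (n * (1 - θ) + 1) + binEnt θ := by
        have hθ := binomialExp_logb_le h₀ h₁ hpos
        have hθ'' := binomialExp_logb_le hθ' (by linarith) hpos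
        rw [binomialExp_natCast_add_one] at hθ hθ''
        unfold gammaCondExp
        gcongr
    _ ≤ logb 2 (n * θ + 1 + (n * (1 - θ) + 1)) :=
        mul_logb_add_mul_logb_add_binEnt_le ⟨h₀, h₁⟩ (by positivity) (by positivity)
    _ = logb 2 (n + 2) := by ring_nf

lemma Continuous.integrable_of_ae_mem_compact {μ : Measure ℝ} [IsFiniteMeasure μ] {K : Set ℝ}
    (hK : IsCompact K) (hμ : ∀ᵐ x ∂μ, x ∈ K) {f : ℝ → ℝ} (hf : Continuous f) :
    Integrable f μ := by
  obtain ⟨C, hC⟩ := hK.exists_bound_of_continuousOn hf.continuousOn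
  exact (integrable_const C).mono' hf.aestronglyMeasurable (hμ.mono hC)

lemma continuous_binEnt : Continuous binEnt := by
  have : binEnt = fun p => (negMulLog p + negMulLog (1 - p)) / log 2 := by
    ext p
    simp only [binEnt, negMulLog, logb]
    ring
  rw [this]
  fun_prop

lemma mul_gammaExp_succ_le {μ : Measure ℝ} [IsProbabilityMeasure μ]
    (hμ : ∀ᵐ θ ∂μ, θ ∈ Set.Icc (0 : ℝ) 1) {n : ℕ} {c : ℕ → ℝ}
    (hc : ∀ k ≤ n, (∫ θ, binEnt θ ∂μ) * c k ≤ logb 2 (k + 1) + ∫ θ, binEnt θ ∂μ) :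
    (∫ θ, binEnt θ ∂μ) * gammaExp μ (n + 1) c ≤ logb 2 (n + 2) := by
  set h := ∫ θ, binEnt θ ∂μ
  set φ : ℕ → ℝ := fun k => logb 2 (k + 1)
  have hint {f : ℝ → ℝ} (hf : Continuous f) : Integrable f μ :=
    hf.integrable_of_ae_mem_compact isCompact_Icc hμ
  have hφ := continuous_gammaCondExp n φ
  calc h * gammaExp μ (n + 1) c
      = ∫ θ, gammaCondExp n (fun k => h * c k) θ ∂μ := by
        simp only [gammaExp_succ, gammaCondExp_const_mul, integral_const_mul]
    _ ≤ ∫ θ, gammaCondExp n φ θ + h ∂μ :=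
        integral_mono_ae (hint (continuous_gammaCondExp n _)) (hint (hφ.add continuous_const))
          (hμ.mono fun θ hθ =>
            (gammaCondExp_mono hθ hc).trans_eq (gammaCondExp_add_const φ h θ))
    _ = ∫ θ, gammaCondExp n φ θ + binEnt θ ∂μ := by
        rw [integral_add (hint hφ) (integrable_const h),
          integral_add (hint hφ) (hint continuous_binEnt)]
        simp [h]
    _ ≤ ∫ _, logb 2 (n + 2) ∂μ :=
        integral_mono_ae (hint (hφ.add continuous_binEnt)) (integrable_const _)
          (hμ.mono fun θ hθ => gammaCondExp_logb_add_binEnt_le n hθ)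
    _ = logb 2 (n + 2) := by simp

theorem stmt7 (μ : Measure ℝ) [IsProbabilityMeasure μ]
    (hsupp : μ (Set.Icc (0:ℝ) 1)ᶜ = 0)
    (h : ℝ) (hdef : h = ∫ θ, binEnt θ ∂μ)
    (Δ : ℕ → ℝ) (hΔ0 : Δ 0 = 1)
    (hΔrec : ∀ ℓ : ℕ, 1 ≤ ℓ → Δ ℓ = 1 + gammaExp μ ℓ Δ) :
    ∀ ℓ : ℕ, 1 ≤ ℓ → h * Δ ℓ ≤ Real.logb 2 ((ℓ : ℝ) + 1) + h := by
  have hμ : ∀ᵐ θ ∂μ, θ ∈ Set.Icc (0 : ℝ) 1 :=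
    (measure_eq_zero_iff_ae_notMem.mp hsupp).mono fun _ => not_not.mp
  suffices ∀ ℓ, h * Δ ℓ ≤ logb 2 (ℓ + 1) + h from fun ℓ _ => this ℓ
  intro ℓ
  induction ℓ using Nat.strong_induction_on with
  | _ ℓ ih =>
    rcases ℓ with _ | n
    · simp [hΔ0]
    · subst hdef
      have := mul_gammaExp_succ_le hμ fun k hk => ih k (Nat.lt_succ_of_le hk)
      rw [hΔrec (n + 1) n.succ_pos, mul_add, mul_one, Nat.cast_succ, add_assoc,
        one_add_one_eq_two]
      linarith
end

section
/- There is a universal constant C < ∞ such that for every θ ∈ [0,1], every n ≥ 1, every sequence (Y_i)_{i≥1} of i.i.d. Bernoulli(θ) random variables with partial sums S_t = Y_1 + ⋯ + Y_t, and every stopping time T with respect to the natural filtration of (Y_i) satisfying 1 ≤ T ≤ n almost surely, E[T·(H_B(θ) - H_B(S_T/T))] ≤ C·E[log₂(T+1)]. -/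
open MeasureTheory ProbabilityTheory

/-- The Bernoulli(θ) law on `ℝ`: mass `θ` at `1` and mass `1-θ` at `0`. -/
noncomputable def bernoulliLaw (θ : ℝ) : Measure ℝ :=
  ENNReal.ofReal θ • Measure.dirac (1 : ℝ) + ENNReal.ofReal (1 - θ) • Measure.dirac (0 : ℝ)

/-!
By Wald's identity `E[S_T] = θ E[T]`, the left-hand side equals
`E[-log₂(θ^{S_T} (1-θ)^{T-S_T}) - T H_B(S_T/T)]`. Since `C(t,s) ≤ 2^{t H_B(s/t)}`, the integrand is
at most `-log₂ q(T, S_T)`, where `q(t,s) = C(t,s) θ^s (1-θ)^{t-s}` dominates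
`p(t,s) = P(T = t, S_T = s)`. So the left-hand side is at most the entropy of `(T, S_T)`, which
Gibbs' inequality against the weights `1/(t(t+1)²)` bounds by `2 + 3 E[log₂(T+1)]`, and
`1 ≤ log₂(T+1)` absorbs the constant.
-/

open Finset Real

theorem Nat.choose_mul_pow_mul_pow_le {t s : ℕ} (hs : s ≤ t) :
    t.choose s * s ^ s * (t - s) ^ (t - s) ≤ t ^ t := by
  calc t.choose s * s ^ s * (t - s) ^ (t - s) = s ^ s * (t - s) ^ (t - s) * t.choose s := by ring
    _ ≤ ∑ k ∈ range (t + 1), s ^ k * (t - s) ^ (t - k) * t.choose k :=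
        single_le_sum (f := fun k => s ^ k * (t - s) ^ (t - k) * t.choose k)
          (fun _ _ => Nat.zero_le _) (mem_range.2 (Nat.lt_succ_of_le hs))
    _ = (s + (t - s)) ^ t := (add_pow s (t - s) t).symm
    _ = t ^ t := by rw [Nat.add_sub_cancel' hs]

lemma mul_logb_div (b x t : ℝ) (ht : t ≠ 0) :
    x * logb b (x / t) = x * logb b x - x * logb b t := by
  rcases eq_or_ne x 0 with rfl | hx
  · simp
  · rw [logb_div hx ht]; ring

lemma mul_binEnt_div (s t : ℝ) (ht : t ≠ 0) :
    t * binEnt (s / t) = t * logb 2 t - s * logb 2 s - (t - s) * logb 2 (t - s) := by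
  have h : 1 - s / t = (t - s) / t := by field_simp
  calc t * binEnt (s / t) = -(s * logb 2 (s / t)) - (t - s) * logb 2 ((t - s) / t) := by
        rw [binEnt, h]; field_simp
    _ = _ := by rw [mul_logb_div _ _ _ ht, mul_logb_div _ _ _ ht]; ring

lemma logb_choose_le_mul_binEnt {t s : ℕ} (hs : s ≤ t) :
    logb 2 (t.choose s) ≤ t * binEnt (s / t) := by
  rcases Nat.eq_zero_or_pos t with rfl | ht
  · simp [Nat.le_zero.1 hs]
  have h1 : (0 : ℝ) < t.choose s := by exact_mod_cast Nat.choose_pos hs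
  have h2 : (0 : ℝ) < (s : ℝ) ^ s := by exact_mod_cast Nat.pow_self_pos
  have h3 : (0 : ℝ) < ((t - s : ℕ) : ℝ) ^ (t - s) := by exact_mod_cast Nat.pow_self_pos
  have hle : (t.choose s : ℝ) * (s : ℝ) ^ s * ((t - s : ℕ) : ℝ) ^ (t - s) ≤ (t : ℝ) ^ t := by
    exact_mod_cast Nat.choose_mul_pow_mul_pow_le hs
  have hlog := logb_le_logb_of_le one_lt_two (by positivity) hle
  rw [logb_mul (by positivity) h3.ne', logb_mul h1.ne' h2.ne', logb_pow, logb_pow, logb_pow]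
    at hlog
  rw [mul_binEnt_div _ _ (by positivity), ← Nat.cast_sub hs]
  linarith

/-- Excess of the code length `-log₂(θ^s (1-θ)^(t-s))` of a binary string of length `t` with
`s` ones over its minimum `t H_B(s/t)` over `θ`. -/
noncomputable def bernoulliRegret (θ : ℝ) (t s : ℕ) : ℝ :=
  -(s * logb 2 θ) - (t - s) * logb 2 (1 - θ) - t * binEnt (s / t)

lemma mul_binEnt_sub_eq (θ : ℝ) (t s : ℕ) :
    t * (binEnt θ - binEnt (s / t)) =
      bernoulliRegret θ t s + (s - θ * t) * (logb 2 θ - logb 2 (1 - θ)) := by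
  rw [bernoulliRegret, binEnt]; ring

lemma bernoulliRegret_le_neg_logb {θ : ℝ} {t s : ℕ} (hs : s ≤ t)
    (hq : 0 < t.choose s * θ ^ s * (1 - θ) ^ (t - s)) :
    bernoulliRegret θ t s ≤ -logb 2 (t.choose s * θ ^ s * (1 - θ) ^ (t - s)) := by
  obtain ⟨hcθ, h1θ⟩ := mul_ne_zero_iff.1 hq.ne'
  obtain ⟨hc, hθ⟩ := mul_ne_zero_iff.1 hcθ
  rw [logb_mul hcθ h1θ, logb_mul hc hθ, logb_pow, logb_pow, Nat.cast_sub hs, bernoulliRegret]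
  linarith [logb_choose_le_mul_binEnt hs]

lemma logb_two_le_two_mul {x : ℝ} (hx : 0 < x) : logb 2 x ≤ 2 * x := by
  rw [logb, div_le_iff₀ (log_pos one_lt_two)]
  nlinarith [log_le_sub_one_of_pos hx, log_two_gt_d9]

lemma neg_logb_mul_le {p q r : ℝ} (hp : 0 < p) (hpq : p ≤ q) (hr : 0 < r) :
    -logb 2 q * p ≤ 2 * r - p * logb 2 r :=
  calc -logb 2 q * p ≤ -logb 2 p * p :=
        mul_le_mul_of_nonneg_right (neg_le_neg (logb_le_logb_of_le one_lt_two hp hpq)) hp.le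
    _ = logb 2 (r / p) * p - p * logb 2 r := by rw [logb_div hr.ne' hp.ne']; ring
    _ ≤ 2 * (r / p) * p - p * logb 2 r := by gcongr; exact logb_two_le_two_mul (by positivity)
    _ = 2 * r - p * logb 2 r := by field_simp

lemma bernoulliRegret_mul_le {θ p r : ℝ} {t s : ℕ} (hs : s ≤ t) (hp : 0 ≤ p)
    (hpq : p ≤ t.choose s * θ ^ s * (1 - θ) ^ (t - s)) (hr : 0 < r) :
    bernoulliRegret θ t s * p ≤ 2 * r - p * logb 2 r := by
  rcases hp.eq_or_lt with rfl | hp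
  · simpa using hr.le
  calc bernoulliRegret θ t s * p
      ≤ -logb 2 (t.choose s * θ ^ s * (1 - θ) ^ (t - s)) * p := by
        gcongr
        exact bernoulliRegret_le_neg_logb hs (hp.trans_le hpq)
    _ ≤ 2 * r - p * logb 2 r := neg_logb_mul_le hp hpq hr

lemma sum_Icc_one_div_mul_succ (n : ℕ) :
    ∑ t ∈ Icc 1 n, (1 : ℝ) / (t * (t + 1)) = 1 - 1 / (n + 1) := by
  induction n with
  | zero => simp
  | succ m ih =>
    rw [sum_Icc_succ_top (by omega), ih]
    push_cast
    field_simp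
    ring

/-- The possible values `(T, S_T)` of a stopping time `1 ≤ T ≤ n` and the number of ones
among the first `T` coin flips. -/
def timeCountPairs (n : ℕ) : Finset ((_ : ℕ) × ℕ) :=
  (Icc 1 n).sigma fun t => range (t + 1)

lemma mem_timeCountPairs {n : ℕ} {x : (_ : ℕ) × ℕ} :
    x ∈ timeCountPairs n ↔ (1 ≤ x.1 ∧ x.1 ≤ n) ∧ x.2 ≤ x.1 := by
  simp [timeCountPairs]

lemma sum_timeCountPairs_inv_le_one (n : ℕ) :
    ∑ x ∈ timeCountPairs n, (1 : ℝ) / (x.1 * (x.1 + 1) ^ 2) ≤ 1 := by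
  have hrow : ∀ t ∈ Icc 1 n, ∑ _s ∈ range (t + 1), (1 : ℝ) / (t * (t + 1) ^ 2)
      = 1 / ((t : ℝ) * (t + 1)) := fun t _ => by
    rw [sum_const, card_range, nsmul_eq_mul]; push_cast; field_simp
  simp only [timeCountPairs, sum_sigma]
  rw [sum_congr rfl hrow, sum_Icc_one_div_mul_succ]
  have : (0 : ℝ) ≤ 1 / (n + 1) := by positivity
  linarith

lemma neg_logb_inv_le {t : ℝ} (ht : 0 < t) :
    -logb 2 (1 / (t * (t + 1) ^ 2)) ≤ 3 * logb 2 (t + 1) := by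
  rw [one_div, logb_inv, neg_neg, logb_mul ht.ne' (by positivity), logb_pow]
  have : logb 2 t ≤ logb 2 (t + 1) := logb_le_logb_of_le one_lt_two ht (by linarith)
  push_cast
  linarith

/-- `p` plays the joint law of `(T, S_T)` and `hwald` is Wald's identity `E[S_T] = θ E[T]`. -/
theorem sum_mul_binEnt_sub_le {θ : ℝ} {n : ℕ} {p : (_ : ℕ) × ℕ → ℝ}
    (hp : ∀ x ∈ timeCountPairs n, 0 ≤ p x)
    (hpq : ∀ x ∈ timeCountPairs n, p x ≤ x.1.choose x.2 * θ ^ x.2 * (1 - θ) ^ (x.1 - x.2))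
    (hp1 : ∑ x ∈ timeCountPairs n, p x = 1)
    (hwald : ∑ x ∈ timeCountPairs n, x.2 * p x = θ * ∑ x ∈ timeCountPairs n, x.1 * p x) :
    ∑ x ∈ timeCountPairs n, x.1 * (binEnt θ - binEnt (x.2 / x.1)) * p x
      ≤ 5 * ∑ x ∈ timeCountPairs n, logb 2 (x.1 + 1) * p x := by
  set F := timeCountPairs n
  set r : ℕ → ℝ := fun t => 1 / (t * (t + 1) ^ 2)
  have ht : ∀ x ∈ F, (1 : ℝ) ≤ x.1 := fun x hx => by
    exact_mod_cast (mem_timeCountPairs.1 hx).1.1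
  have hlog : ∑ x ∈ F, p x ≤ ∑ x ∈ F, logb 2 (x.1 + 1) * p x := by
    refine sum_le_sum fun x hx => le_mul_of_one_le_left (hp x hx) ?_
    exact (logb_self_eq_one one_lt_two).symm.trans_le
      (logb_le_logb_of_le one_lt_two two_pos (by linarith [ht x hx]))
  calc ∑ x ∈ F, x.1 * (binEnt θ - binEnt (x.2 / x.1)) * p x
      = ∑ x ∈ F, (bernoulliRegret θ x.1 x.2 * p x
          + (logb 2 θ - logb 2 (1 - θ)) * (x.2 * p x - θ * (x.1 * p x))) :=
        sum_congr rfl fun x _ => by rw [mul_binEnt_sub_eq]; ring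
    _ = ∑ x ∈ F, bernoulliRegret θ x.1 x.2 * p x := by
        rw [sum_add_distrib, ← mul_sum, sum_sub_distrib, ← mul_sum, hwald, sub_self, mul_zero,
          add_zero]
    _ ≤ ∑ x ∈ F, (2 * r x.1 - p x * logb 2 (r x.1)) :=
        sum_le_sum fun x hx => bernoulliRegret_mul_le (mem_timeCountPairs.1 hx).2 (hp x hx)
          (hpq x hx) (by have := ht x hx; positivity)
    _ = 2 * ∑ x ∈ F, r x.1 + ∑ x ∈ F, -logb 2 (r x.1) * p x := by
        rw [mul_sum, ← sum_add_distrib]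
        exact sum_congr rfl fun x _ => by ring
    _ ≤ 2 * 1 + ∑ x ∈ F, 3 * (logb 2 (x.1 + 1) * p x) := by
        refine add_le_add
          (mul_le_mul_of_nonneg_left (sum_timeCountPairs_inv_le_one n) zero_le_two)
          (sum_le_sum fun x hx => ?_)
        rw [← mul_assoc]
        exact mul_le_mul_of_nonneg_right (neg_logb_inv_le (by linarith [ht x hx])) (hp x hx)
    _ ≤ 5 * ∑ x ∈ F, logb 2 (x.1 + 1) * p x := by
        rw [← mul_sum]
        linarith

lemma integral_eq_sum_of_ae_eq_comp {Ω ι : Type*} [MeasurableSpace Ω] {P : Measure Ω}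
    [IsFiniteMeasure P] {X : Ω → ι} {f : Ω → ℝ} {g : ι → ℝ} (s : Finset ι)
    (hX : ∀ i ∈ s, MeasurableSet (X ⁻¹' {i})) (hs : ∀ᵐ ω ∂P, X ω ∈ s)
    (hf : ∀ᵐ ω ∂P, f ω = g (X ω)) :
    ∫ ω, f ω ∂P = ∑ i ∈ s, g i * P.real (X ⁻¹' {i}) := by
  have hsimple : f =ᵐ[P] fun ω => ∑ i ∈ s, (X ⁻¹' {i}).indicator (fun _ => g i) ω := by
    filter_upwards [hs, hf] with ω hω hfω
    rw [hfω, sum_eq_single_of_mem (f := fun i => (X ⁻¹' {i}).indicator (fun _ => g i) ω) (X ω) hω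
      fun i _ hi => Set.indicator_of_notMem (Ne.symm hi) _,
      Set.indicator_of_mem (show ω ∈ X ⁻¹' {X ω} from rfl)]
  rw [integral_congr_ae hsimple,
    integral_finsetSum _ fun i hi => (integrable_const _).indicator (hX i hi)]
  exact sum_congr rfl fun i hi => by
    rw [integral_indicator_const _ (hX i hi), smul_eq_mul, mul_comm]

section BernoulliLaw

variable {Ω : Type*} [MeasurableSpace Ω] {P : Measure Ω}

lemma bernoulliLaw_singleton_one (θ : ℝ) : bernoulliLaw θ {1} = ENNReal.ofReal θ := by
  simp [bernoulliLaw]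

lemma bernoulliLaw_compl_singleton_one (θ : ℝ) :
    bernoulliLaw θ {1}ᶜ = ENNReal.ofReal (1 - θ) := by
  simp [bernoulliLaw, Measure.dirac_apply']

lemma ae_bernoulliLaw_eq_zero_or_one (θ : ℝ) : ∀ᵐ x ∂bernoulliLaw θ, x = 0 ∨ x = 1 := by
  refine ae_add_measure_iff.2 ⟨Measure.ae_smul_measure ?_ _, Measure.ae_smul_measure ?_ _⟩ <;>
    simp [ae_dirac_eq]

variable {θ : ℝ} {X : Ω → ℝ}

lemma ae_eq_zero_or_one_of_map_eq_bernoulliLaw (hX : Measurable X)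
    (hlaw : P.map X = bernoulliLaw θ) :
    ∀ᵐ ω ∂P, X ω = 0 ∨ X ω = 1 :=
  ae_of_ae_map hX.aemeasurable (hlaw ▸ ae_bernoulliLaw_eq_zero_or_one θ)

lemma integrable_of_map_eq_bernoulliLaw [IsFiniteMeasure P] (hX : Measurable X)
    (hlaw : P.map X = bernoulliLaw θ) : Integrable X P :=
  .of_bound hX.aestronglyMeasurable 1 <| (ae_eq_zero_or_one_of_map_eq_bernoulliLaw hX hlaw).mono
    fun ω hω => by rcases hω with h | h <;> simp [h]

lemma integral_eq_of_map_eq_bernoulliLaw (hθ : 0 ≤ θ) (hX : Measurable X)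
    (hlaw : P.map X = bernoulliLaw θ) :
    ∫ ω, X ω ∂P = θ := by
  have hind : X =ᵐ[P] (X ⁻¹' {1}).indicator fun _ => 1 :=
    (ae_eq_zero_or_one_of_map_eq_bernoulliLaw hX hlaw).mono fun ω hω => by
      rcases hω with h | h <;> simp [h]
  rw [integral_congr_ae hind, integral_indicator_const _ (hX (measurableSet_singleton 1)),
    measureReal_def, ← Measure.map_apply hX (measurableSet_singleton 1), hlaw,
    bernoulliLaw_singleton_one, ENNReal.toReal_ofReal hθ, smul_eq_mul, mul_one]

end BernoulliLaw

lemma sum_range_eq_sum_range_ite_mul (f : ℕ → ℝ) {k n : ℕ} (h : k ≤ n) :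
    ∑ i ∈ range k, f i = ∑ i ∈ range n, (if i < k then 1 else 0) * f i := by
  simp only [ite_mul, one_mul, zero_mul]
  rw [← sum_filter]
  congr 1
  ext i
  simp only [mem_range, mem_filter]
  omega

/-- `σ(Y 0, …, Y (t-1))`: the information available before the `t`-th observation. -/
abbrev natFiltration {Ω β : Type*} [mβ : MeasurableSpace β] (Y : ℕ → Ω → β) (t : ℕ) :
    MeasurableSpace Ω :=
  ⨆ i ∈ range t, MeasurableSpace.comap (Y i) mβ

section NatFiltration

variable {Ω β : Type*} [MeasurableSpace β] {Y : ℕ → Ω → β} {T : Ω → ℕ}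

lemma natFiltration_mono : Monotone (natFiltration (Ω := Ω) Y) :=
  fun _ _ hst => biSup_mono fun _ hi => mem_range.2 ((mem_range.1 hi).trans_le hst)

lemma measurableSet_lt_of_stopping (hT : ∀ t, MeasurableSet[natFiltration Y t] {ω | T ω = t})
    (i : ℕ) : MeasurableSet[natFiltration Y i] {ω | i < T ω} := by
  have h : {ω | i < T ω} = (⋃ t ∈ range (i + 1), {ω | T ω = t})ᶜ := by
    ext ω
    simp only [Set.mem_ofPred_eq, Set.mem_compl_iff, Set.mem_iUnion, mem_range, exists_prop,
      exists_eq_right']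
    omega
  rw [h]
  exact (Finset.measurableSet_biUnion _ fun t ht =>
    natFiltration_mono (Nat.lt_succ_iff.1 (mem_range.1 ht)) _ (hT t)).compl

variable [mΩ : MeasurableSpace Ω] {P : Measure Ω}

lemma natFiltration_le (hYm : ∀ i, Measurable (Y i)) (t : ℕ) : natFiltration Y t ≤ mΩ :=
  iSup₂_le fun i _ => (hYm i).comap_le

lemma indep_natFiltration (hYm : ∀ i, Measurable (Y i)) (hY : iIndepFun Y P) (i : ℕ) :
    Indep (natFiltration Y i) (MeasurableSpace.comap (Y i) inferInstance) P := by
  have h := indep_iSup_of_disjoint (fun j => (hYm j).comap_le) hY.iIndep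
    (S := (range i : Set ℕ)) (T := {i}) (by simp)
  simpa [natFiltration] using h

end NatFiltration

section Wald

variable {Ω : Type*} [MeasurableSpace Ω] {P : Measure Ω} {Y : ℕ → Ω → ℝ} {T : Ω → ℕ}

theorem integral_sum_range_stopping_eq [IsFiniteMeasure P] (hYm : ∀ i, Measurable (Y i))
    (hY : iIndepFun Y P) (hint : ∀ i, Integrable (Y i) P) {m : ℝ}
    (hmean : ∀ i, ∫ ω, Y i ω ∂P = m) {n : ℕ} (hTn : ∀ ω, T ω ≤ n)
    (hT : ∀ t, MeasurableSet[natFiltration Y t] {ω | T ω = t}) :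
    ∫ ω, ∑ i ∈ range (T ω), Y i ω ∂P = m * ∫ ω, (T ω : ℝ) ∂P := by
  set χ : ℕ → Ω → ℝ := fun i ω => if i < T ω then 1 else 0
  have hχm : ∀ i, Measurable[natFiltration Y i] (χ i) := fun i =>
    Measurable.ite (measurableSet_lt_of_stopping hT i) measurable_const measurable_const
  have hχ : ∀ i, Measurable (χ i) := fun i => (hχm i).mono (natFiltration_le hYm i) le_rfl
  have hχint : ∀ i, Integrable (χ i) P := fun i =>
    .of_bound (hχ i).aestronglyMeasurable 1 (ae_of_all _ fun ω => by
      by_cases h : i < T ω <;> simp [χ, h])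
  have hindep : ∀ i, IndepFun (χ i) (Y i) P := fun i => (IndepFun_iff_Indep _ _ _).2
    (indep_of_indep_of_le_left (indep_natFiltration hYm hY i) (hχm i).comap_le)
  calc ∫ ω, ∑ i ∈ range (T ω), Y i ω ∂P = ∫ ω, ∑ i ∈ range n, χ i ω * Y i ω ∂P :=
        integral_congr_ae (ae_of_all _ fun ω => sum_range_eq_sum_range_ite_mul _ (hTn ω))
    _ = ∑ i ∈ range n, (∫ ω, χ i ω ∂P) * m := by
        rw [integral_finsetSum (f := fun i ω => χ i ω * Y i ω) _
          fun i _ => (hindep i).integrable_mul (hχint i) (hint i)]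
        refine sum_congr rfl fun i _ => ?_
        rw [(hindep i).integral_fun_mul_eq_mul_integral (hχ i).aestronglyMeasurable
          (hYm i).aestronglyMeasurable, hmean]
    _ = m * ∫ ω, ∑ i ∈ range n, χ i ω ∂P := by
        rw [integral_finsetSum _ fun i _ => hχint i, mul_sum]
        simp only [mul_comm]
    _ = m * ∫ ω, (T ω : ℝ) ∂P := by
        congr 1
        refine integral_congr_ae (ae_of_all _ fun ω => ?_)
        have h := sum_range_eq_sum_range_ite_mul (fun _ => 1) (hTn ω)
        simp only [mul_one, sum_const, card_range, nsmul_one] at h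
        exact h.symm

end Wald

lemma Finset.sum_eq_card_filter_eq_one {ι : Type*} (s : Finset ι) {f : ι → ℝ}
    (hf : ∀ i ∈ s, f i = 0 ∨ f i = 1) : ∑ i ∈ s, f i = #(s.filter fun i => f i = 1) := by
  rw [natCast_card_filter]
  refine sum_congr rfl fun i hi => ?_
  rcases hf i hi with h | h <;> simp [h]

noncomputable def onesBefore {Ω : Type*} (Y : ℕ → Ω → ℝ) (t : ℕ) (ω : Ω) : Finset ℕ :=
  (range t).filter fun i => Y i ω = 1

section Ones

variable {Ω : Type*} {Y : ℕ → Ω → ℝ} {t s : ℕ} {A : Finset ℕ}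

lemma setOf_onesBefore_eq (hA : A ⊆ range t) :
    {ω | onesBefore Y t ω = A} = ⋂ i ∈ range t, Y i ⁻¹' (if i ∈ A then {1} else {1}ᶜ) := by
  ext ω
  simp only [Set.mem_ofPred_eq, Set.mem_iInter, Finset.ext_iff, onesBefore, mem_filter, mem_range]
  constructor
  · intro h i hi
    split_ifs with hiA
    · exact ((h i).2 hiA).2
    · exact fun h1 => hiA ((h i).1 ⟨hi, h1⟩)
  · intro h i
    by_cases hiA : i ∈ A
    · have hi := mem_range.1 (hA hiA)
      simpa [hiA, hi] using h i hi
    · simpa [hiA] using fun hi => h i hi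

lemma setOf_card_onesBefore_eq :
    {ω | #(onesBefore Y t ω) = s} = ⋃ A ∈ powersetCard s (range t), {ω | onesBefore Y t ω = A} := by
  ext ω
  simp only [Set.mem_ofPred_eq, Set.mem_iUnion, mem_powersetCard, exists_prop]
  exact ⟨fun h => ⟨_, ⟨filter_subset _ _, h⟩, rfl⟩, fun ⟨_, ⟨_, hA⟩, h⟩ => h ▸ hA⟩

variable [MeasurableSpace Ω] {P : Measure Ω} {θ : ℝ}

lemma measurableSet_onesBefore_eq (hYm : ∀ i, Measurable (Y i)) (hA : A ⊆ range t) :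
    MeasurableSet {ω | onesBefore Y t ω = A} := by
  rw [setOf_onesBefore_eq hA]
  refine Finset.measurableSet_biInter _ fun i _ => hYm i ?_
  split_ifs
  exacts [measurableSet_singleton 1, (measurableSet_singleton 1).compl]

lemma measurableSet_card_onesBefore_eq (hYm : ∀ i, Measurable (Y i)) :
    MeasurableSet {ω | #(onesBefore Y t ω) = s} := by
  rw [setOf_card_onesBefore_eq]
  exact Finset.measurableSet_biUnion _ fun A hA =>
    measurableSet_onesBefore_eq hYm (mem_powersetCard.1 hA).1

lemma measure_onesBefore_eq (hYm : ∀ i, Measurable (Y i)) (hY : iIndepFun Y P)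
    (hlaw : ∀ i, P.map (Y i) = bernoulliLaw θ) (hA : A ⊆ range t) :
    P {ω | onesBefore Y t ω = A} = ENNReal.ofReal θ ^ #A * ENNReal.ofReal (1 - θ) ^ (t - #A) := by
  have hmeas : ∀ i, MeasurableSet ((if i ∈ A then {1} else {1}ᶜ : Set ℝ)) := fun i => by
    split_ifs
    exacts [measurableSet_singleton 1, (measurableSet_singleton 1).compl]
  have hfactor : ∀ i, P (Y i ⁻¹' (if i ∈ A then {1} else {1}ᶜ))
      = if i ∈ A then ENNReal.ofReal θ else ENNReal.ofReal (1 - θ) := fun i => by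
    rw [← Measure.map_apply (hYm i) (hmeas i), hlaw i]
    split_ifs
    exacts [bernoulliLaw_singleton_one θ, bernoulliLaw_compl_singleton_one θ]
  rw [setOf_onesBefore_eq hA, hY.meas_biInter fun i _ => ⟨_, hmeas i, rfl⟩,
    prod_congr rfl fun i _ => hfactor i, prod_ite, prod_const, prod_const, filter_mem_eq_inter,
    inter_eq_right.2 hA, filter_not, filter_mem_eq_inter, inter_eq_right.2 hA,
    card_sdiff_of_subset hA, card_range]

lemma measureReal_card_onesBefore_le [IsFiniteMeasure P] (hθ : θ ∈ Set.Icc 0 1)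
    (hYm : ∀ i, Measurable (Y i)) (hY : iIndepFun Y P) (hlaw : ∀ i, P.map (Y i) = bernoulliLaw θ) :
    P.real {ω | #(onesBefore Y t ω) = s} ≤ t.choose s * θ ^ s * (1 - θ) ^ (t - s) := by
  have h : P {ω | #(onesBefore Y t ω) = s}
      ≤ t.choose s * (ENNReal.ofReal θ ^ s * ENNReal.ofReal (1 - θ) ^ (t - s)) := by
    rw [setOf_card_onesBefore_eq]
    refine (measure_biUnion_finset_le _ _).trans_eq ?_
    rw [sum_congr rfl fun A hA => by
      rw [measure_onesBefore_eq hYm hY hlaw (mem_powersetCard.1 hA).1, (mem_powersetCard.1 hA).2],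
      sum_const, card_powersetCard, card_range, nsmul_eq_mul]
  have h' := ENNReal.toReal_mono (by finiteness) h
  rwa [ENNReal.toReal_mul, ENNReal.toReal_mul, ENNReal.toReal_pow, ENNReal.toReal_pow,
    ENNReal.toReal_ofReal hθ.1, ENNReal.toReal_ofReal (sub_nonneg.2 hθ.2), ENNReal.toReal_natCast,
    ← mul_assoc] at h'

end Ones

section Main

variable {Ω : Type*} [MeasurableSpace Ω] {P : Measure Ω} {θ : ℝ} {Y : ℕ → Ω → ℝ}

theorem integral_mul_binEnt_sub_le [IsProbabilityMeasure P] (hθ : θ ∈ Set.Icc 0 1)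
    (hYm : ∀ i, Measurable (Y i)) (hY : iIndepFun Y P) (hlaw : ∀ i, P.map (Y i) = bernoulliLaw θ)
    {n : ℕ} {T : Ω → ℕ} (hT1 : ∀ ω, 1 ≤ T ω) (hTn : ∀ ω, T ω ≤ n)
    (hT : ∀ t, MeasurableSet[natFiltration Y t] {ω | T ω = t}) :
    ∫ ω, (T ω : ℝ) * (binEnt θ - binEnt ((∑ i ∈ range (T ω), Y i ω) / (T ω : ℝ))) ∂P
      ≤ 5 * ∫ ω, logb 2 ((T ω : ℝ) + 1) ∂P := by
  set X : Ω → (_ : ℕ) × ℕ := fun ω => ⟨T ω, #(onesBefore Y (T ω) ω)⟩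
  have hfiber : ∀ x, X ⁻¹' {x} = {ω | T ω = x.1} ∩ {ω | #(onesBefore Y x.1 ω) = x.2} := by
    intro x
    ext ω
    simp only [Set.mem_preimage, Set.mem_singleton_iff, Sigma.ext_iff, heq_eq_eq, X,
      Set.mem_inter_iff, Set.mem_ofPred_eq]
    exact ⟨fun ⟨h1, h2⟩ => ⟨h1, h1 ▸ h2⟩, fun ⟨h1, h2⟩ => ⟨h1, h1 ▸ h2⟩⟩
  have hX : ∀ x, MeasurableSet (X ⁻¹' {x}) := fun x => hfiber x ▸
    (natFiltration_le hYm _ _ (hT x.1)).inter (measurableSet_card_onesBefore_eq hYm)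
  have hsum : ∀ᵐ ω ∂P, ∑ i ∈ range (T ω), Y i ω = (X ω).2 := by
    filter_upwards [ae_all_iff.2 fun i => ae_eq_zero_or_one_of_map_eq_bernoulliLaw (hYm i) (hlaw i)]
      with ω h
    exact sum_eq_card_filter_eq_one _ fun i _ => h i
  have hE : ∀ {f : Ω → ℝ} (g : (_ : ℕ) × ℕ → ℝ), (∀ᵐ ω ∂P, f ω = g (X ω)) →
      ∫ ω, f ω ∂P = ∑ x ∈ timeCountPairs n, g x * P.real (X ⁻¹' {x}) := fun g hf =>
    integral_eq_sum_of_ae_eq_comp _ (fun x _ => hX x) (ae_of_all _ fun ω =>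
      mem_timeCountPairs.2 ⟨⟨hT1 ω, hTn ω⟩, (card_filter_le _ _).trans (card_range _).le⟩) hf
  have hwald := integral_sum_range_stopping_eq hYm hY
    (fun i => integrable_of_map_eq_bernoulliLaw (hYm i) (hlaw i))
    (fun i => integral_eq_of_map_eq_bernoulliLaw hθ.1 (hYm i) (hlaw i)) hTn hT
  rw [hE (fun x => x.1 * (binEnt θ - binEnt (x.2 / x.1))) (hsum.mono fun ω h => by rw [h]),
    hE (fun x => logb 2 (x.1 + 1)) (ae_of_all _ fun ω => rfl)]
  refine sum_mul_binEnt_sub_le (fun x _ => measureReal_nonneg) (fun x _ => ?_) ?_ ?_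
  · exact (measureReal_mono (hfiber x ▸ Set.inter_subset_right)).trans
      (measureReal_card_onesBefore_le hθ hYm hY hlaw)
  · simpa using (hE (f := fun _ => 1) (fun _ => 1) (ae_of_all _ fun _ => rfl)).symm
  · rwa [hE (fun x => x.2) hsum, hE (fun x => x.1) (ae_of_all _ fun ω => rfl)] at hwald

end Main

theorem stmt12 :
    ∃ C : ℝ, ∀ (Ω : Type) (_ : MeasurableSpace Ω) (P : Measure Ω),
      IsProbabilityMeasure P →
      ∀ θ : ℝ, θ ∈ Set.Icc (0:ℝ) 1 →
      -- `Y i` is the `(i+1)`-st coin flip, so `Y 0, Y 1, …` play the roles of `Y_1, Y_2, …`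
      ∀ Y : ℕ → Ω → ℝ, (∀ i, Measurable (Y i)) →
      iIndepFun Y P →
      (∀ i, P.map (Y i) = bernoulliLaw θ) →
      ∀ n : ℕ, 1 ≤ n →
      ∀ T : Ω → ℕ, (∀ ω, 1 ≤ T ω) → (∀ ω, T ω ≤ n) →
      -- `T` is a stopping time for the natural filtration `σ(Y_1, …, Y_t)`
      (∀ t : ℕ,
        MeasurableSet[⨆ i ∈ Finset.range t, MeasurableSpace.comap (Y i) inferInstance]
          {ω | T ω = t}) →
      ∫ ω, (T ω : ℝ) *
          (binEnt θ - binEnt ((∑ i ∈ Finset.range (T ω), Y i ω) / (T ω : ℝ))) ∂P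
        ≤ C * ∫ ω, Real.logb 2 ((T ω : ℝ) + 1) ∂P := by
  refine ⟨5, fun Ω _ P _ θ hθ Y hYm hY hlaw n _ T hT1 hTn hT => ?_⟩
  exact integral_mul_binEnt_sub_le hθ hYm hY hlaw hT1 hTn hT
end
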